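/- The set of flats of a q-matroid (E,r) satisfies: (F1) E is a flat; (F2) the intersection of two flats is a flat; (F3) for every flat F and every one-dimensional subspace x ⊄ F, there is a unique flat F' covering F (in the poset of flats ordered by inclusion) with x ⊆ F'. -/

import Mathlib

/-!
Intersections of flats are flats because, by submodularity, a one-dimensional `x` that does not
raise the rank of `A` does not raise the rank of any `B ≥ A`. For (F3), a maximal subspace
containing `F + x` of the same rank `r F + 1` is a flat `F'`. Ranks of flats strictly increase
along strict inclusions, so no flat lies strictly between `F` and `F'`; and any other covering
flat `F''` containing `x` meets `F'` in a flat strictly above `F`, which forces `F'' ≤ F'`.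
-/

/-- A flat of the q-matroid (E,r). -/
def IsQMFlat {K E : Type*} [Field K] [AddCommGroup E] [Module K E]
    (r : Submodule K E → ℤ) (F : Submodule K E) : Prop :=
  ∀ x : Submodule K E, Module.finrank K x = 1 → ¬ x ≤ F → r F < r (F ⊔ x)

section

variable {K E : Type*} [Field K] [AddCommGroup E] [Module K E] {r : Submodule K E → ℤ}

theorem rank_sup_le_of_rank_sup_le_of_le (hmono : Monotone r)
    (hsub : ∀ A B : Submodule K E, r (A ⊔ B) + r (A ⊓ B) ≤ r A + r B)
    {A B x : Submodule K E} (hAB : A ≤ B) (h : r (A ⊔ x) ≤ r A) : r (B ⊔ x) ≤ r B := by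
  have hsup : (A ⊔ x) ⊔ B = B ⊔ x := by
    rw [sup_comm A x, sup_assoc, sup_eq_right.mpr hAB, sup_comm]
  have hinf : r A ≤ r ((A ⊔ x) ⊓ B) := hmono (le_inf le_sup_left hAB)
  have := hsub (A ⊔ x) B
  rw [hsup] at this
  linarith

theorem rank_sup_le_add_one (hnonneg : ∀ A : Submodule K E, 0 ≤ r A)
    (hdim : ∀ A : Submodule K E, r A ≤ Module.finrank K A)
    (hsub : ∀ A B : Submodule K E, r (A ⊔ B) + r (A ⊓ B) ≤ r A + r B)
    (A : Submodule K E) {x : Submodule K E} (hx : Module.finrank K x = 1) :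
    r (A ⊔ x) ≤ r A + 1 := by
  have hrx : r x ≤ 1 := by simpa [hx] using hdim x
  linarith [hsub A x, hnonneg (A ⊓ x)]

theorem exists_isQMFlat_ge_rank_eq [FiniteDimensional K E] (hmono : Monotone r)
    (A : Submodule K E) : ∃ F, IsQMFlat r F ∧ A ≤ F ∧ r F = r A := by
  obtain ⟨F, ⟨hAF, hrF⟩, hmax⟩ :=
    exists_maximal_of_wellFoundedGT (fun B ↦ A ≤ B ∧ r B = r A) ⟨A, le_rfl, rfl⟩
  refine ⟨F, fun y _ hyF ↦ ?_, hAF, hrF⟩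
  by_contra! hle
  have hr : r (F ⊔ y) = r A := (le_antisymm hle (hmono le_sup_left)).trans hrF
  exact hyF (le_sup_right.trans (hmax ⟨hAF.trans le_sup_left, hr⟩ le_sup_left))

namespace IsQMFlat

theorem top : IsQMFlat r (⊤ : Submodule K E) :=
  fun _ _ hx ↦ absurd le_top hx

theorem inf (hmono : Monotone r)
    (hsub : ∀ A B : Submodule K E, r (A ⊔ B) + r (A ⊓ B) ≤ r A + r B)
    {F₁ F₂ : Submodule K E} (h₁ : IsQMFlat r F₁) (h₂ : IsQMFlat r F₂) :
    IsQMFlat r (F₁ ⊓ F₂) := by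
  intro x hx hxF
  by_contra! hle
  by_cases hx₁ : x ≤ F₁
  · have hx₂ : ¬ x ≤ F₂ := fun hx₂ ↦ hxF (le_inf hx₁ hx₂)
    exact (h₂ x hx hx₂).not_ge (rank_sup_le_of_rank_sup_le_of_le hmono hsub inf_le_right hle)
  · exact (h₁ x hx hx₁).not_ge (rank_sup_le_of_rank_sup_le_of_le hmono hsub inf_le_left hle)

theorem rank_lt_of_lt (hmono : Monotone r) {H G : Submodule K E} (hH : IsQMFlat r H)
    (hHG : H < G) : r H < r G := by
  obtain ⟨w, hwG, hwH⟩ := SetLike.exists_of_lt hHG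
  have hw : w ≠ 0 := fun h ↦ hwH (h ▸ H.zero_mem)
  have hspan : ¬ (K ∙ w) ≤ H := fun h ↦ hwH (h (Submodule.mem_span_singleton_self w))
  calc r H < r (H ⊔ K ∙ w) := hH _ (finrank_span_singleton hw) hspan
    _ ≤ r G := hmono (sup_le hHG.le ((Submodule.span_singleton_le_iff_mem w G).mpr hwG))

theorem eq_of_lt_of_le (hmono : Monotone r) {F H G : Submodule K E} (hF : IsQMFlat r F)
    (hH : IsQMFlat r H) (hFH : F < H) (hHG : H ≤ G) (hG : r G ≤ r F + 1) : H = G := by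
  by_contra hne
  have := hF.rank_lt_of_lt hmono hFH
  have := hH.rank_lt_of_lt hmono (lt_of_le_of_ne hHG hne)
  omega

theorem existsUnique_cover [FiniteDimensional K E] (hnonneg : ∀ A : Submodule K E, 0 ≤ r A)
    (hdim : ∀ A : Submodule K E, r A ≤ Module.finrank K A) (hmono : Monotone r)
    (hsub : ∀ A B : Submodule K E, r (A ⊔ B) + r (A ⊓ B) ≤ r A + r B)
    {F x : Submodule K E} (hF : IsQMFlat r F) (hx : Module.finrank K x = 1) (hxF : ¬ x ≤ F) :
    ∃! F' : Submodule K E, IsQMFlat r F' ∧ x ≤ F' ∧ F < F' ∧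
      ∀ H : Submodule K E, IsQMFlat r H → F < H → ¬ H < F' := by
  have hFx : F < F ⊔ x := left_lt_sup.mpr hxF
  obtain ⟨F', hF', hle, hr⟩ := exists_isQMFlat_ge_rank_eq hmono (F ⊔ x)
  have hrank : r F' ≤ r F + 1 := hr ▸ rank_sup_le_add_one hnonneg hdim hsub F hx
  refine ⟨F', ⟨hF', le_sup_right.trans hle, hFx.trans_le hle, fun H hH hFH hHF' ↦
    hHF'.ne (hF.eq_of_lt_of_le hmono hH hFH hHF'.le hrank)⟩, ?_⟩
  rintro F'' ⟨hF'', hxF'', hFF'', hcover⟩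
  have hmeet : F'' ⊓ F' = F'' := by
    by_contra hne
    exact hcover _ (hF''.inf hmono hsub hF') (hFx.trans_le (le_inf (sup_le hFF''.le hxF'') hle))
      (lt_of_le_of_ne inf_le_left hne)
  exact hF.eq_of_lt_of_le hmono hF'' hFF'' (hmeet ▸ inf_le_right) hrank

end IsQMFlat

end

theorem stmt4 {K E : Type*} [Field K] [AddCommGroup E] [Module K E]
    [FiniteDimensional K E]
    (r : Submodule K E → ℤ)
    (hR1 : ∀ A : Submodule K E, 0 ≤ r A ∧ r A ≤ Module.finrank K A)
    (hR2 : ∀ A B : Submodule K E, A ≤ B → r A ≤ r B)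
    (hR3 : ∀ A B : Submodule K E, r (A ⊔ B) + r (A ⊓ B) ≤ r A + r B) :
    IsQMFlat r (⊤ : Submodule K E) ∧
    (∀ F₁ F₂ : Submodule K E, IsQMFlat r F₁ → IsQMFlat r F₂ → IsQMFlat r (F₁ ⊓ F₂)) ∧
    (∀ F x : Submodule K E, IsQMFlat r F → Module.finrank K x = 1 → ¬ x ≤ F →
      ∃! F' : Submodule K E, IsQMFlat r F' ∧ x ≤ F' ∧ F < F' ∧
        ∀ H : Submodule K E, IsQMFlat r H → F < H → ¬ H < F') := by
  have hmono : Monotone r := fun A B ↦ hR2 A B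
  exact ⟨IsQMFlat.top, fun _ _ h₁ h₂ ↦ h₁.inf hmono hR3 h₂, fun _ _ hF hx hxF ↦
    hF.existsUnique_cover (fun A ↦ (hR1 A).1) (fun A ↦ (hR1 A).2) hmono hR3 hx hxF⟩
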